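/- arXiv:1203.6859 — 2 statements merged into one kernel-verified Lean document; each statement's English description precedes it below -/
import Mathlib

section
/- If A1 is self-framing and A1 * A2 semantically entails A3, then A1 semantically entails A2 -* A3. -/
/-- Values: object identifiers, integers, or null. -/
inductive Val : Type
  | obj : ℕ → Val
  | intv : ℤ → Val
  | null : Val

/-- A total heap maps (object-id, field-id) pairs to values. -/
abbrev Heap : Type := Val → ℕ → Val

/-- A permission mask maps (object-id, field-id) pairs to (nonnegative rational) permissions. -/
abbrev Mask : Type := Val → ℕ → NNRat

/-- Environments give values to variables. -/
abbrev Env : Type := ℕ → Val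

/-- A field location: pair of an object identifier and a field identifier. -/
abbrev Loc : Type := Val × ℕ

/-- Compatibility of two permission masks: pointwise sums stay at most 1. -/
def Mask.compat (P₁ P₂ : Mask) : Prop := ∀ o f, P₁ o f + P₂ o f ≤ 1

/-- The set of readable locations of a mask: those with positive permission. -/
def Mask.rds (P : Mask) : Set Loc := {l | 0 < P l.1 l.2}

/-- Two heaps agree on a set of locations. -/
def Heap.agrees (F : Set Loc) (H₁ H₂ : Heap) : Prop :=
  ∀ l : Loc, l ∈ F → H₁ l.1 l.2 = H₂ l.1 l.2

/-- TPL expressions (possibly heap-dependent). -/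
inductive Expr : Type
  | var : ℕ → Expr
  | null : Expr
  | intc : ℤ → Expr
  | fld : Expr → ℕ → Expr

/-- Expression evaluation in an environment and total heap. -/
def Expr.eval (σ : Env) (H : Heap) : Expr → Val
  | .var x => σ x
  | .null => Val.null
  | .intc n => Val.intv n
  | .fld E f => H (E.eval σ H) f

/-- TPL assertions. -/
inductive Assertion : Type
  | eq : Expr → Expr → Assertion
  | pointsTo : Expr → ℕ → NNRat → Expr → Assertion
  | acc : Expr → ℕ → NNRat → Assertion
  | sep : Assertion → Assertion → Assertion
  | wand : Assertion → Assertion → Assertion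
  | conj : Assertion → Assertion → Assertion
  | disj : Assertion → Assertion → Assertion
  | impl : Assertion → Assertion → Assertion
  | exis : ℕ → Assertion → Assertion

/-- Minimal permission extension: `MinExt S H P P'` says `P'` is a minimal permission
extension of the state with heap `H`, mask `P` to satisfy the predicate `S`. -/
def MinExt (S : Heap → Mask → Prop) (H : Heap) (P P' : Mask) : Prop :=
  S H (P + P') ∧
    ∀ P'' : Mask, P'' ≤ P' → Mask.rds P'' ⊂ Mask.rds P' → ¬ S H (P + P'')

/-- Environment update. -/
def Env.upd (σ : Env) (x : ℕ) (v : Val) : Env := fun y => if y = x then v else σ y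

/-- Total heap semantics for TPL assertions. -/
def sat : Heap → Mask → Env → Assertion → Prop
  | H, P, σ, .eq E E' => E.eval σ H = E'.eval σ H
  | H, P, σ, .pointsTo E f π E' =>
      π ≤ P (E.eval σ H) f ∧ H (E.eval σ H) f = E'.eval σ H
  | H, P, σ, .acc E f π => π ≤ P (E.eval σ H) f
  | H, P, σ, .sep A₁ A₂ =>
      ∃ P₁ P₂ : Mask, Mask.compat P₁ P₂ ∧ P = P₁ + P₂ ∧
        sat H P₁ σ A₁ ∧ sat H P₂ σ A₂
  | H, P, σ, .wand A₁ A₂ =>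
      ∀ (P' : Mask) (H' : Heap), Mask.compat P' P →
        Heap.agrees (Mask.rds P ∪ (Mask.rds P')ᶜ) H H' →
        MinExt (fun h p => sat h p σ A₁) H' 0 P' →
        sat H' (P + P') σ A₂
  | H, P, σ, .conj A₁ A₂ => sat H P σ A₁ ∧ sat H P σ A₂
  | H, P, σ, .disj A₁ A₂ => sat H P σ A₁ ∨ sat H P σ A₂
  | H, P, σ, .impl A₁ A₂ =>
      ∀ (P' : Mask) (H' : Heap), Mask.compat P' P →
        Heap.agrees (Mask.rds P ∪ (Mask.rds P')ᶜ) H H' →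
        MinExt (fun h p => sat h p σ A₁) H' P P' →
        sat H' (P + P') σ A₂
  | H, P, σ, .exis x A => ∃ v : Val, sat H P (σ.upd x v) A

/-- A formula is weakenable iff its truth is closed under permission extension. -/
def Weakenable (A : Assertion) : Prop :=
  ∀ (H : Heap) (P P' : Mask) (σ : Env), P ≤ P' → sat H P σ A → sat H P' σ A

/-- A formula is pure iff it doesn't depend on permissions. -/
def IsPure (A : Assertion) : Prop :=
  ∀ (H : Heap) (P : Mask) (σ : Env), sat H P σ A → sat H 0 σ A

/-- A formula is self-framing iff its truth is robust to interference on
locations without permission. -/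
def SelfFraming (A : Assertion) : Prop :=
  ∀ (H H' : Heap) (P : Mask) (σ : Env),
    sat H P σ A → Heap.agrees (Mask.rds P) H H' → sat H' P σ A

/-- A formula is supported iff satisfaction is closed under pointwise min of masks. -/
def Supported (A : Assertion) : Prop :=
  ∀ (H : Heap) (σ : Env) (P₁ P₂ : Mask),
    sat H P₁ σ A → sat H P₂ σ A → sat H (P₁ ⊓ P₂) σ A

/-- Semantic entailment. -/
def Entails (A B : Assertion) : Prop :=
  ∀ (H : Heap) (P : Mask) (σ : Env), sat H P σ A → sat H P σ B

/-- Semantic equivalence. -/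
def AEquiv (A B : Assertion) : Prop := Entails A B ∧ Entails B A

theorem Mask.compat.symm {P₁ P₂ : Mask} (h : Mask.compat P₁ P₂) : Mask.compat P₂ P₁ :=
  fun o f => add_comm (P₂ o f) (P₁ o f) ▸ h o f

theorem Heap.agrees.mono {F G : Set Loc} {H₁ H₂ : Heap} (h : Heap.agrees F H₁ H₂) (hGF : G ⊆ F) :
    Heap.agrees G H₁ H₂ :=
  fun l hl => h l (hGF hl)

theorem MinExt.holds_of_zero {S : Heap → Mask → Prop} {H : Heap} {P' : Mask}
    (h : MinExt S H 0 P') : S H P' := by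
  simpa only [zero_add] using h.1

/-- If `A₁` is self-framing and `A₁ * A₂` semantically entails `A₃`, then `A₁`
semantically entails `A₂ -* A₃`. -/
theorem entails_wand_of_sep (A₁ A₂ A₃ : Assertion)
    (hsf : SelfFraming A₁) (h : Entails (A₁.sep A₂) A₃) :
    Entails A₁ (A₂.wand A₃) := by
  intro H P σ hA₁ P' H' hcompat hagree hmin
  -- `P + P'` splits as `P` for `A₁`, which survives the heap change outside `rds P` by
  -- self-framing, and `P'` for `A₂`, which the minimal extension provides.
  exact h H' (P + P') σ
    ⟨P, P', hcompat.symm, rfl, hsf H H' P σ hA₁ (hagree.mono Set.subset_union_left),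
      hmin.holds_of_zero⟩
end

section
/- Composition of minimal extensions for supported assertions: if ext(H, ∅, σ, P1, A1), ext(H, ∅, σ, P2, A2), P1 ⊥ P2, and A1 and A2 are supported, then ext(H, ∅, σ, P1 * P2, A1 * A2). -/
/-!
If `P` is a minimal extension for a supported assertion `A` and `A` also holds under `Q`,
then `A` holds under `Q ⊓ P`, whose readable locations lie in those of `P`; minimality forces
equality, so `Q` reads every location `P` reads. Any split `Q₁ + Q₂` of a mask satisfying
`A₁ * A₂` therefore reads all of `rds P₁ ∪ rds P₂ = rds (P₁ + P₂)`, which rules out a strictly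
smaller extension.
-/

namespace Mask

lemma rds_add (P Q : Mask) : rds (P + Q) = rds P ∪ rds Q := by
  ext l
  simp [rds, pos_iff_ne_zero, or_iff_not_and_not]

lemma rds_inf (P Q : Mask) : rds (P ⊓ Q) = rds P ∩ rds Q := by
  ext l
  simp [rds]

end Mask

namespace MinExt

variable {S : Heap → Mask → Prop} {H : Heap} {P Q : Mask}

lemma holds_of_zero_s13 (h : MinExt S H 0 P) : S H P := by
  simpa using h.1

lemma rds_subset_of_inf (h : MinExt S H 0 P) (hQP : S H (Q ⊓ P)) :
    Mask.rds P ⊆ Mask.rds Q := by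
  by_contra hPQ
  refine h.2 (Q ⊓ P) inf_le_right ⟨?_, fun hP => hPQ ?_⟩ (by rwa [zero_add])
  · exact (Mask.rds_inf Q P).symm ▸ Set.inter_subset_right
  · exact hP.trans ((Mask.rds_inf Q P).symm ▸ Set.inter_subset_left)

end MinExt

/-- Composition of minimal extensions for supported assertions: combining
compatible minimal permission extensions for supported `A₁` and `A₂` yields a
minimal permission extension for `A₁ * A₂`. -/
theorem minExt_sep_compose (A₁ A₂ : Assertion) (H : Heap) (P₁ P₂ : Mask) (σ : Env)
    (hs₁ : Supported A₁) (hs₂ : Supported A₂) (hc : Mask.compat P₁ P₂)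
    (h₁ : MinExt (fun h p => sat h p σ A₁) H 0 P₁)
    (h₂ : MinExt (fun h p => sat h p σ A₂) H 0 P₂) :
    MinExt (fun h p => sat h p σ (A₁.sep A₂)) H 0 (P₁ + P₂) := by
  refine ⟨?_, ?_⟩
  · rw [zero_add]
    exact ⟨P₁, P₂, hc, rfl, h₁.holds_of_zero_s13, h₂.holds_of_zero_s13⟩
  · rintro P'' - hlt hsat
    rw [zero_add] at hsat
    obtain ⟨Q₁, Q₂, -, rfl, hQ₁, hQ₂⟩ := hsat
    have hP₁ := h₁.rds_subset_of_inf (hs₁ H σ Q₁ P₁ hQ₁ h₁.holds_of_zero_s13)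
    have hP₂ := h₂.rds_subset_of_inf (hs₂ H σ Q₂ P₂ hQ₂ h₂.holds_of_zero_s13)
    refine hlt.2 ?_
    rw [Mask.rds_add, Mask.rds_add]
    exact Set.union_subset_union hP₁ hP₂
end
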